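/- Let σ and w be unit vectors in ℂ^N with ⟨w,σ⟩ = ⟨σ,w⟩ = x for some real 0 < x < 1, let E > 0 be real, set θ = arccos x and η = E·sin(2θ). Let H = 2iEx·(|w⟩⟨σ| − |σ⟩⟨w|). Then at time t = θ/η, exp(−iHt)·σ = w exactly. -/

import Mathlib

open scoped InnerProductSpace

/-- The outer product |u⟩⟨v| : the rank-one operator sending φ to ⟨v,φ⟩·u
(inner product conjugate-linear in the first argument). -/
noncomputable def outer {N : ℕ} (u v : EuclideanSpace ℂ (Fin N)) :
    EuclideanSpace ℂ (Fin N) →L[ℂ] EuclideanSpace ℂ (Fin N) :=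
  ContinuousLinearMap.toSpanSingleton ℂ u ∘L (innerSL ℂ v)

/-! With `cos θ = x`, the unit vector `u = (w - x σ) / sin θ` is orthogonal to `σ`, and the generator
`A = |w⟩⟨σ| - |σ⟩⟨w|` acts on the plane spanned by `σ, u` as `σ ↦ sin θ • u`, `u ↦ -sin θ • σ`.
Since `η = 2 E x sin θ`, we get `-i H t = (θ / sin θ) • A`, so `exp (-i H t)` rotates `σ` by the
angle `θ` in that plane: it sends `σ` to `cos θ • σ + sin θ • u = w`. -/

open Complex

section Exp

variable {V : Type*} [NormedAddCommGroup V] [NormedSpace ℂ V] [CompleteSpace V]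

theorem NormedSpace.exp_apply_of_apply_eq_smul {M : V →L[ℂ] V} {v : V} {μ : ℂ}
    (h : M v = μ • v) : NormedSpace.exp M v = Complex.exp μ • v := by
  have hpow : ∀ n : ℕ, (M ^ n) v = μ ^ n • v := by
    intro n
    induction n with
    | zero => simp
    | succ n ih =>
      rw [pow_succ', ContinuousLinearMap.mul_def, ContinuousLinearMap.comp_apply, ih, map_smul, h,
        smul_smul, pow_succ]
  have hM := (NormedSpace.exp_series_hasSum_exp' (𝕂 := ℂ) M).mapL (ContinuousLinearMap.apply ℂ V v)
  have hμ := (NormedSpace.exp_series_hasSum_exp' (𝕂 := ℂ) μ).smul_const v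
  rw [Complex.exp_eq_exp_ℂ]
  refine hM.unique (hμ.congr_fun fun n => ?_)
  simp [hpow n, smul_smul]

/-- `v ± i u` are eigenvectors of `M` with eigenvalues `∓ i θ`. -/
theorem NormedSpace.exp_apply_eq_cos_smul_add_sin_smul {M : V →L[ℂ] V} {v u : V} {θ : ℂ}
    (hv : M v = θ • u) (hu : M u = -θ • v) :
    NormedSpace.exp M v = Complex.cos θ • v + Complex.sin θ • u := by
  have hplus : M (v + I • u) = (-θ * I) • (v + I • u) := by
    rw [map_add, map_smul, hv, hu]
    linear_combination (norm := module) (θ * I_sq) • u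
  have hminus : M (v - I • u) = (θ * I) • (v - I • u) := by
    rw [map_sub, map_smul, hv, hu]
    linear_combination (norm := module) (θ * I_sq) • u
  have hsplit : v = (2 : ℂ)⁻¹ • (v + I • u) + (2 : ℂ)⁻¹ • (v - I • u) := by module
  conv_lhs => rw [hsplit]
  rw [map_add, map_smul, map_smul, exp_apply_of_apply_eq_smul hplus,
    exp_apply_of_apply_eq_smul hminus, Complex.cos, Complex.sin]
  module

end Exp

theorem outer_apply {N : ℕ} (u v φ : EuclideanSpace ℂ (Fin N)) : outer u v φ = ⟪v, φ⟫_ℂ • u := rfl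

theorem outer_sub_outer_apply_left {N : ℕ} {σ w : EuclideanSpace ℂ (Fin N)} (hσ : ‖σ‖ = 1)
    {c : ℂ} (hwσ : ⟪w, σ⟫_ℂ = c) : (outer w σ - outer σ w) σ = w - c • σ := by
  simp [outer_apply, inner_self_eq_norm_sq_to_K, hσ, hwσ]

theorem outer_sub_outer_apply_right {N : ℕ} {σ w : EuclideanSpace ℂ (Fin N)} (hw : ‖w‖ = 1)
    {c : ℂ} (hσw : ⟪σ, w⟫_ℂ = c) : (outer w σ - outer σ w) w = c • w - σ := by
  simp [outer_apply, inner_self_eq_norm_sq_to_K, hw, hσw]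

theorem exp_smul_outer_sub_outer_apply_eq {N : ℕ} {σ w : EuclideanSpace ℂ (Fin N)}
    (hσ : ‖σ‖ = 1) (hw : ‖w‖ = 1) {θ : ℝ} (hsin : Real.sin θ ≠ 0)
    (hwσ : ⟪w, σ⟫_ℂ = Real.cos θ) (hσw : ⟪σ, w⟫_ℂ = Real.cos θ) :
    NormedSpace.exp (((θ / Real.sin θ : ℝ) : ℂ) • (outer w σ - outer σ w)) σ = w := by
  have hpyth : (Real.sin θ : ℂ) ^ 2 + (Real.cos θ : ℂ) ^ 2 = 1 :=
    mod_cast Real.sin_sq_add_cos_sq θ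
  rw [ofReal_div]
  set s : ℂ := (Real.sin θ : ℂ)
  set c : ℂ := (Real.cos θ : ℂ)
  have hs : s ≠ 0 := ofReal_ne_zero.mpr hsin
  set u := s⁻¹ • (w - c • σ)
  have hv : ((θ / s) • (outer w σ - outer σ w)) σ = (θ : ℂ) • u := by
    rw [_root_.smul_apply, outer_sub_outer_apply_left hσ hwσ]
    match_scalars <;> field_simp
  have hu : ((θ / s) • (outer w σ - outer σ w)) u = -(θ : ℂ) • σ := by
    rw [_root_.smul_apply, map_smul, map_sub, map_smul,
      outer_sub_outer_apply_left hσ hwσ, outer_sub_outer_apply_right hw hσw]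
    match_scalars
    · field_simp; ring
    · field_simp; linear_combination (θ : ℂ) * hpyth
  rw [NormedSpace.exp_apply_eq_cos_smul_add_sin_smul hv hu, ← ofReal_cos, ← ofReal_sin]
  change c • σ + s • s⁻¹ • (w - c • σ) = w
  rw [smul_inv_smul₀ hs, add_sub_cancel]

theorem stmt_7 {N : ℕ} (σ w : EuclideanSpace ℂ (Fin N))
    (hσ : ‖σ‖ = 1) (hw : ‖w‖ = 1) (x : ℝ) (hx0 : 0 < x) (hx1 : x < 1)
    (hwσ : ⟪w, σ⟫_ℂ = (x : ℂ)) (hσw : ⟪σ, w⟫_ℂ = (x : ℂ))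
    (E : ℝ) (hE : 0 < E) (θ η : ℝ) (hθ : θ = Real.arccos x)
    (hη : η = E * Real.sin (2 * θ))
    (H : EuclideanSpace ℂ (Fin N) →L[ℂ] EuclideanSpace ℂ (Fin N))
    (hH : H = (2 * Complex.I * (E : ℂ) * (x : ℂ)) • (outer w σ - outer σ w))
    (t : ℝ) (ht : t = θ / η) :
    NormedSpace.exp ((-(Complex.I * (t : ℂ))) • H) σ = w := by
  have hcos : Real.cos θ = x := hθ ▸ Real.cos_arccos (by linarith) hx1.le
  have hsin : 0 < Real.sin θ := hθ ▸ Real.sin_arccos x ▸ Real.sqrt_pos.mpr (by nlinarith)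
  have hrate : 2 * t * E * x = θ / Real.sin θ := by
    rw [ht, hη, Real.sin_two_mul, hcos]
    field_simp
  have hscalar : -(I * t) * (2 * I * E * x) = ((θ / Real.sin θ : ℝ) : ℂ) := by
    rw [← hrate]
    push_cast
    linear_combination (-2 : ℂ) * t * E * x * I_sq
  rw [hH, smul_smul, hscalar]
  exact exp_smul_outer_sub_outer_apply_eq hσ hw hsin.ne' (hcos ▸ hwσ) (hcos ▸ hσw)
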